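/- Let I be a set, B_i locally compact Hausdorff spaces, and r_i : Y_i → B_i continuous maps for i ∈ I. Set B = ⨿_{i∈I} B_i and Y = ⨿_{i∈I} Y_i with the induced anchor map r : Y → B. Then β_B Y is homeomorphic to the disjoint union ⨿_{i∈I} β_{B_i} Y_i. -/

import Mathlib

/-!
Restriction to the summands and extension by zero identify `H_Y = C_b(Y) · r*(C₀(B))` with the
`c₀`-direct sum of the algebras `H_{Y_i}`: every element of `H_Y` is the unconditional sum of its
restrictions to the summands. For `r*(h)` this holds because `|h|` is small off a compact set,
which meets only finitely many `B_i`; the elements with this property form a closed star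
subalgebra that is also an ideal, so it contains the generators `f · r*(h)`. Consequently a character `χ` of `H_Y` does not vanish on some summand `H_{Y_i}`,
and on only one, since the summands are mutually orthogonal. It then factors through restriction
to `Y_i`, as `χ(e a) χ(x) = χ(e a · x) = χ(e (a · x|_{Y_i}))` for the extension by zero `e`.
-/

open scoped ZeroAtInfty BoundedContinuousFunction
open WeakDual Filter

/-- The pullback `r*(h) = h ∘ r` of a `C₀` function along a continuous map, as a bounded
continuous function. -/
noncomputable def pullbackBCF {X B : Type*} [TopologicalSpace X] [TopologicalSpace B]
    (r : C(X, B)) (h : C₀(B, ℂ)) : X →ᵇ ℂ :=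
  h.toBCF.compContinuous r

/-- The commutative C*-algebra `H_X = C_b(X) · r*(C₀(B))`, realised as the closure of the
non-unital star subalgebra of `C_b(X)` generated by the products `f · r*(h)`. -/
noncomputable def relSCAlg {X B : Type*} [TopologicalSpace X] [TopologicalSpace B]
    (r : C(X, B)) : NonUnitalStarSubalgebra ℂ (X →ᵇ ℂ) :=
  (NonUnitalStarAlgebra.adjoin ℂ
    {w : X →ᵇ ℂ | ∃ f : X →ᵇ ℂ, ∃ h : C₀(B, ℂ), w = f * pullbackBCF r h}).topologicalClosure

/-- The relative Stone–Čech compactification `β_B X` of a `B`-space `(X, r)`: the character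
space (spectrum) of `H_X = C_b(X) · r*(C₀(B))`. -/
noncomputable def RelSC {X B : Type*} [TopologicalSpace X] [TopologicalSpace B]
    (r : C(X, B)) :=
  characterSpace ℂ (relSCAlg r)

/-- Evaluation at a point `x : X`, as an element of the weak dual of `H_X`. -/
noncomputable def relSCEvalChar {X B : Type*} [TopologicalSpace X] [TopologicalSpace B]
    (r : C(X, B)) (x : X) : WeakDual ℂ (relSCAlg r) :=
  (BoundedContinuousFunction.evalCLM ℂ x).comp
    (⟨{ toFun := fun f => (f : X →ᵇ ℂ),
        map_add' := fun _ _ => rfl,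
        map_smul' := fun _ _ => rfl }, continuous_subtype_val⟩ :
      relSCAlg r →L[ℂ] (X →ᵇ ℂ))

/-- The canonical map `i : X → β_B X`, sending a point to the evaluation character. -/
noncomputable def relSCMap {X B : Type*} [TopologicalSpace X] [TopologicalSpace B]
    [LocallyCompactSpace B] [T2Space B] (r : C(X, B)) (x : X) : RelSC r := by
  refine ⟨relSCEvalChar r x, ?_, fun f g => rfl⟩
  obtain ⟨h, h_comp, -, hx⟩ := exists_continuous_nonneg_pos (r x)
  have hC0 : Tendsto (fun b => (h b : ℂ)) (Filter.cocompact B) (nhds 0) := by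
    simpa [Function.comp_def] using ((Complex.continuous_ofReal.tendsto 0).comp
      (HasCompactSupport.is_zero_at_infty h_comp))
  set h' : C₀(B, ℂ) := ⟨⟨fun b => (h b : ℂ), Complex.continuous_ofReal.comp h.continuous⟩, hC0⟩
  have hmem : (1 : X →ᵇ ℂ) * pullbackBCF r h' ∈ relSCAlg r :=
    (NonUnitalStarAlgebra.adjoin ℂ _).le_topologicalClosure
      (NonUnitalStarAlgebra.subset_adjoin ℂ _ ⟨1, h', rfl⟩)
  intro h0
  have h2 : ((1 : X →ᵇ ℂ) * pullbackBCF r h') x = 0 := by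
    have := congrArg (fun φ : WeakDual ℂ (relSCAlg r) => φ ⟨_, hmem⟩) h0
    exact this
  apply hx
  have h3 : (h (r x) : ℂ) = 0 := by
    simpa [pullbackBCF, h', BoundedContinuousFunction.coe_compContinuous] using h2
  exact_mod_cast h3

open Topology

namespace BoundedContinuousFunction

variable {ι : Type*} {Z : ι → Type*} [∀ i, TopologicalSpace (Z i)]

noncomputable def sigmaRestrict (i : ι) : ((Σ j, Z j) →ᵇ ℂ) →⋆ₙₐ[ℂ] (Z i →ᵇ ℂ) where
  toFun f := f.compContinuous ⟨Sigma.mk i, continuous_sigmaMk⟩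
  map_smul' _ _ := rfl
  map_zero' := rfl
  map_add' _ _ := rfl
  map_mul' _ _ := rfl
  map_star' _ := rfl

@[simp]
lemma sigmaRestrict_apply (i : ι) (f : (Σ j, Z j) →ᵇ ℂ) (z : Z i) :
    sigmaRestrict i f z = f ⟨i, z⟩ := rfl

lemma continuous_sigmaRestrict (i : ι) : Continuous (sigmaRestrict (Z := Z) i) :=
  continuous_compContinuous _

variable [DecidableEq ι]

lemma norm_piSingle_apply_le (i : ι) (f : Z i →ᵇ ℂ) (p : Σ j, Z j) :
    ‖Pi.single (M := fun j => Z j →ᵇ ℂ) i f p.1 p.2‖ ≤ ‖f‖ := by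
  obtain ⟨j, z⟩ := p
  rcases eq_or_ne j i with rfl | h
  · simpa using f.norm_coe_le_norm z
  · simp [h]

noncomputable def sigmaExtend (i : ι) : (Z i →ᵇ ℂ) →⋆ₙₐ[ℂ] ((Σ j, Z j) →ᵇ ℂ) where
  toFun f := ofNormedAddCommGroup (fun p => Pi.single (M := fun j => Z j →ᵇ ℂ) i f p.1 p.2)
    (continuous_sigma fun j => (Pi.single (M := fun j => Z j →ᵇ ℂ) i f j).continuous) ‖f‖
    (norm_piSingle_apply_le i f)
  map_smul' c f := by ext ⟨j, z⟩; simp [Pi.single_smul]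
  map_zero' := by ext ⟨j, z⟩; simp
  map_add' f g := by ext ⟨j, z⟩; simp [Pi.single_add]
  map_mul' f g := by ext ⟨j, z⟩; simp [Pi.single_mul]
  map_star' f := by ext ⟨j, z⟩; simp [Pi.single_star]

lemma sigmaExtend_apply (i : ι) (f : Z i →ᵇ ℂ) (p : Σ j, Z j) :
    sigmaExtend i f p = Pi.single (M := fun j => Z j →ᵇ ℂ) i f p.1 p.2 := rfl

@[simp]
lemma sigmaExtend_apply_self (i : ι) (f : Z i →ᵇ ℂ) (z : Z i) :
    sigmaExtend i f ⟨i, z⟩ = f z := by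
  simp [sigmaExtend_apply]

lemma sigmaExtend_apply_of_ne {i j : ι} (h : j ≠ i) (f : Z i →ᵇ ℂ) (z : Z j) :
    sigmaExtend i f ⟨j, z⟩ = 0 := by
  simp [sigmaExtend_apply, h]

lemma norm_sigmaExtend_le (i : ι) (f : Z i →ᵇ ℂ) : ‖sigmaExtend i f‖ ≤ ‖f‖ :=
  norm_ofNormedAddCommGroup_le _ (norm_nonneg f) (norm_piSingle_apply_le i f)

@[simp]
lemma sigmaRestrict_sigmaExtend (i : ι) (f : Z i →ᵇ ℂ) :
    sigmaRestrict i (sigmaExtend i f) = f := by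
  ext z; simp

lemma sigmaRestrict_sigmaExtend_of_ne {i j : ι} (h : j ≠ i) (f : Z i →ᵇ ℂ) :
    sigmaRestrict j (sigmaExtend i f) = 0 := by
  ext z; simp [sigmaExtend_apply_of_ne h]

lemma sigmaExtend_mul (i : ι) (f : Z i →ᵇ ℂ) (w : (Σ j, Z j) →ᵇ ℂ) :
    sigmaExtend i f * w = sigmaExtend i (f * sigmaRestrict i w) := by
  ext ⟨j, z⟩
  rcases eq_or_ne j i with rfl | h
  · simp
  · simp [sigmaExtend_apply_of_ne h]

lemma sum_sigmaExtend_sigmaRestrict_apply (F : Finset ι) (w : (Σ j, Z j) →ᵇ ℂ)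
    (p : Σ j, Z j) :
    (∑ j ∈ F, sigmaExtend j (sigmaRestrict j w)) p = if p.1 ∈ F then w p else 0 :=
  calc (∑ j ∈ F, sigmaExtend j (sigmaRestrict j w)) p
      = (∑ j ∈ F, Pi.single (M := fun j => Z j →ᵇ ℂ) j (sigmaRestrict j w) p.1) p.2 := by
        simp only [coe_sum, Finset.sum_apply, sigmaExtend_apply]
    _ = if p.1 ∈ F then w p else 0 := by
        rw [Finset.sum_pi_single]; split_ifs <;> rfl

lemma norm_sum_sigmaExtend_sigmaRestrict_le (F : Finset ι) (w : (Σ j, Z j) →ᵇ ℂ) :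
    ‖∑ j ∈ F, sigmaExtend j (sigmaRestrict j w)‖ ≤ ‖w‖ :=
  (norm_le (norm_nonneg w)).2 fun p => by
    rw [sum_sigmaExtend_sigmaRestrict_apply]
    split_ifs
    · exact w.norm_coe_le_norm p
    · simp

lemma sigmaExtend_sigmaRestrict_mul (i : ι) (f w : (Σ j, Z j) →ᵇ ℂ) :
    sigmaExtend i (sigmaRestrict i (f * w)) = f * sigmaExtend i (sigmaRestrict i w) := by
  rw [mul_comm f (sigmaExtend i _), sigmaExtend_mul, ← map_mul, mul_comm]

lemma continuous_sigmaExtend (i : ι) : Continuous (sigmaExtend (Z := Z) i) :=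
  AddMonoidHomClass.continuous_of_bound _ 1 fun f => by simpa using norm_sigmaExtend_le i f

/-- The functions that are the unconditional sum of their restrictions to the summands, i.e. that
vanish at infinity in the direction of the index set. -/
noncomputable def sigmaSummable : NonUnitalStarSubalgebra ℂ ((Σ j, Z j) →ᵇ ℂ) where
  carrier := {w | HasSum (fun j => sigmaExtend j (sigmaRestrict j w)) w}
  add_mem' {w v} hw hv := by simpa only [Set.mem_ofPred_eq, map_add] using hw.add hv
  zero_mem' := by simpa only [Set.mem_ofPred_eq, map_zero] using hasSum_zero
  mul_mem' {w v} _ hv := by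
    simpa only [Set.mem_ofPred_eq, sigmaExtend_sigmaRestrict_mul] using hv.mul_left w
  smul_mem' c w hw := by simpa only [Set.mem_ofPred_eq, map_smul] using hw.const_smul c
  star_mem' {w} hw := by simpa only [Set.mem_ofPred_eq, map_star] using hw.star

lemma mem_sigmaSummable {w : (Σ j, Z j) →ᵇ ℂ} :
    w ∈ sigmaSummable ↔ HasSum (fun j => sigmaExtend j (sigmaRestrict j w)) w := Iff.rfl

lemma mul_mem_sigmaSummable (f : (Σ j, Z j) →ᵇ ℂ) {w : (Σ j, Z j) →ᵇ ℂ}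
    (hw : w ∈ sigmaSummable) : f * w ∈ sigmaSummable := by
  simpa only [mem_sigmaSummable, sigmaExtend_sigmaRestrict_mul] using hw.mul_left f

lemma isClosed_sigmaSummable : IsClosed (sigmaSummable (Z := Z) : Set ((Σ j, Z j) →ᵇ ℂ)) := by
  have hlip (F : Finset ι) :
      LipschitzWith 1 fun w : (Σ j, Z j) →ᵇ ℂ => ∑ j ∈ F, sigmaExtend j (sigmaRestrict j w) :=
    LipschitzWith.of_dist_le_mul fun w v => by
      simpa [dist_eq_norm, ← Finset.sum_sub_distrib] using
        norm_sum_sigmaExtend_sigmaRestrict_le F (w - v)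
  exact (LipschitzWith.uniformEquicontinuous _ 1 hlip).equicontinuous.isClosed_setOfPred_tendsto
    continuous_id

end BoundedContinuousFunction

namespace ZeroAtInftyContinuousMap

variable {ι : Type*} {B : ι → Type*} [∀ i, TopologicalSpace (B i)]

noncomputable def sigmaRestrict (i : ι) (h : C₀((Σ j, B j), ℂ)) : C₀(B i, ℂ) :=
  h.comp ⟨⟨Sigma.mk i, continuous_sigmaMk⟩, IsClosedEmbedding.sigmaMk.tendsto_cocompact⟩

variable [DecidableEq ι]

noncomputable def sigmaExtend (i : ι) (h : C₀(B i, ℂ)) : C₀((Σ j, B j), ℂ) where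
  toContinuousMap := (BoundedContinuousFunction.sigmaExtend i h.toBCF).toContinuousMap
  zero_at_infty' := by
    refine tendsto_def.2 fun s hs => ?_
    obtain ⟨K, hK, hKs⟩ := mem_cocompact.1 (h.zero_at_infty' hs)
    refine mem_cocompact.2 ⟨Sigma.mk i '' K, hK.image continuous_sigmaMk, ?_⟩
    rintro ⟨j, b⟩ hb
    rcases eq_or_ne j i with rfl | hj
    · simpa using hKs fun hbK => hb ⟨b, hbK, rfl⟩
    · simpa [BoundedContinuousFunction.sigmaExtend_apply_of_ne hj] using mem_of_mem_nhds hs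

@[simp]
lemma sigmaExtend_apply_self (i : ι) (h : C₀(B i, ℂ)) (b : B i) :
    sigmaExtend i h ⟨i, b⟩ = h b :=
  BoundedContinuousFunction.sigmaExtend_apply_self i h.toBCF b

end ZeroAtInftyContinuousMap

section RelSCAlg

variable {X B : Type*} [TopologicalSpace X] [TopologicalSpace B] (r : C(X, B))

@[simp]
lemma pullbackBCF_apply (h : C₀(B, ℂ)) (x : X) : pullbackBCF r h x = h (r x) := rfl

lemma isClosed_relSCAlg : IsClosed (relSCAlg r : Set (X →ᵇ ℂ)) :=
  NonUnitalStarSubalgebra.isClosed_topologicalClosure _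

lemma mul_pullbackBCF_mem_relSCAlg (f : X →ᵇ ℂ) (h : C₀(B, ℂ)) :
    f * pullbackBCF r h ∈ relSCAlg r :=
  NonUnitalStarSubalgebra.le_topologicalClosure _
    (NonUnitalStarAlgebra.subset_adjoin ℂ _ ⟨f, h, rfl⟩)

lemma relSCAlg_le_of_isClosed {S : NonUnitalStarSubalgebra ℂ (X →ᵇ ℂ)}
    (hS : IsClosed (S : Set (X →ᵇ ℂ))) (hgen : ∀ f h, f * pullbackBCF r h ∈ S) :
    relSCAlg r ≤ S :=
  NonUnitalStarSubalgebra.topologicalClosure_minimal _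
    (NonUnitalStarAlgebra.adjoin_le (by rintro _ ⟨f, h, rfl⟩; exact hgen f h)) hS

end RelSCAlg

section SigmaAnchor

open BoundedContinuousFunction

variable {ι : Type*} {B Y : ι → Type*} [∀ i, TopologicalSpace (B i)]
  [∀ i, TopologicalSpace (Y i)] (r : ∀ i, C(Y i, B i))

noncomputable def sigmaAnchor : C((Σ i, Y i), (Σ i, B i)) :=
  ⟨Sigma.map id fun i => r i, Continuous.sigma_map fun i => (r i).continuous⟩

@[simp]
lemma sigmaAnchor_apply (i : ι) (y : Y i) : sigmaAnchor r ⟨i, y⟩ = ⟨i, r i y⟩ := rfl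

lemma sigmaRestrict_pullbackBCF_sigmaAnchor (i : ι) (h : C₀((Σ j, B j), ℂ)) :
    sigmaRestrict i (pullbackBCF (sigmaAnchor r) h) =
      pullbackBCF (r i) (ZeroAtInftyContinuousMap.sigmaRestrict i h) := rfl

lemma sigmaRestrict_mem_relSCAlg (i : ι) {w : (Σ j, Y j) →ᵇ ℂ}
    (hw : w ∈ relSCAlg (sigmaAnchor r)) : sigmaRestrict i w ∈ relSCAlg (r i) := by
  refine relSCAlg_le_of_isClosed (sigmaAnchor r) (S := (relSCAlg (r i)).comap (sigmaRestrict i))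
    ((isClosed_relSCAlg _).preimage (continuous_sigmaRestrict i)) (fun f h => ?_) hw
  simpa only [NonUnitalStarSubalgebra.mem_comap, map_mul, sigmaRestrict_pullbackBCF_sigmaAnchor]
    using mul_pullbackBCF_mem_relSCAlg (r i) _ _

variable [DecidableEq ι]

lemma sigmaExtend_mul_pullbackBCF (i : ι) (f : Y i →ᵇ ℂ) (h : C₀(B i, ℂ)) :
    sigmaExtend i (f * pullbackBCF (r i) h) =
      sigmaExtend i f * pullbackBCF (sigmaAnchor r) (ZeroAtInftyContinuousMap.sigmaExtend i h) := by
  ext ⟨j, y⟩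
  rcases eq_or_ne j i with rfl | hj
  · simp
  · simp [sigmaExtend_apply_of_ne hj]

lemma sigmaExtend_mem_relSCAlg (i : ι) {f : Y i →ᵇ ℂ} (hf : f ∈ relSCAlg (r i)) :
    sigmaExtend i f ∈ relSCAlg (sigmaAnchor r) := by
  refine relSCAlg_le_of_isClosed (r i) (S := (relSCAlg (sigmaAnchor r)).comap (sigmaExtend i))
    ((isClosed_relSCAlg _).preimage (continuous_sigmaExtend i)) (fun g h => ?_) hf
  rw [NonUnitalStarSubalgebra.mem_comap, sigmaExtend_mul_pullbackBCF]
  exact mul_pullbackBCF_mem_relSCAlg _ _ _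

lemma pullbackBCF_sigmaAnchor_mem_sigmaSummable (h : C₀((Σ j, B j), ℂ)) :
    pullbackBCF (sigmaAnchor r) h ∈ sigmaSummable := by
  refine Metric.tendsto_atTop.2 fun ε hε => ?_
  obtain ⟨K, hK, hKε⟩ :=
    mem_cocompact.1 (h.zero_at_infty' (Metric.ball_mem_nhds 0 (half_pos hε)))
  obtain ⟨s, t, hs, -, rfl⟩ := hK.sigma_exists_finite_sigma_eq
  refine ⟨hs.toFinset, fun F hF => ((dist_le (half_pos hε).le).2 fun ⟨j, y⟩ => ?_).trans_lt
    (half_lt_self hε)⟩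
  rw [sum_sigmaExtend_sigmaRestrict_apply]
  split_ifs with hj
  · simpa using (half_pos hε).le
  · have hjK : (⟨j, r j y⟩ : Σ j, B j) ∉ s.sigma t :=
      fun hjK => hj (hF (hs.mem_toFinset.2 hjK.1))
    have hsmall : ‖h ⟨j, r j y⟩‖ < ε / 2 := mem_ball_zero_iff.1 (hKε hjK)
    simpa [dist_comm] using hsmall.le

lemma hasSum_sigmaExtend_sigmaRestrict_of_mem_relSCAlg {w : (Σ j, Y j) →ᵇ ℂ}
    (hw : w ∈ relSCAlg (sigmaAnchor r)) :
    HasSum (fun j => sigmaExtend j (sigmaRestrict j w)) w :=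
  relSCAlg_le_of_isClosed _ isClosed_sigmaSummable
    (fun f h => mul_mem_sigmaSummable f (pullbackBCF_sigmaAnchor_mem_sigmaSummable r h)) hw

end SigmaAnchor

namespace WeakDual.CharacterSpace

variable {𝕜 A B : Type*} [CommSemiring 𝕜] [TopologicalSpace 𝕜] [ContinuousAdd 𝕜]
  [ContinuousConstSMul 𝕜 𝕜] [NonUnitalNonAssocSemiring A] [TopologicalSpace A] [Module 𝕜 A]
  [NonUnitalNonAssocSemiring B] [TopologicalSpace B] [Module 𝕜 B]

lemma exists_apply_ne_zero (φ : characterSpace 𝕜 A) : ∃ a, φ a ≠ 0 := by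
  by_contra! h
  exact φ.2.1 (ContinuousLinearMap.ext h)

lemma continuous_of_continuous_eval {α : Type*} [TopologicalSpace α]
    {g : α → characterSpace 𝕜 A} (h : ∀ a, Continuous fun x => g x a) : Continuous g :=
  (WeakDual.continuous_of_continuous_eval h).subtype_mk _

lemma eval_continuous (a : A) : Continuous fun φ : characterSpace 𝕜 A => φ a :=
  (WeakDual.eval_continuous a).comp continuous_subtype_val

lemma isOpen_setOf_exists_apply_ne_zero [T1Space 𝕜] {β : Type*} (T : β → A) :
    IsOpen {φ : characterSpace 𝕜 A | ∃ b, φ (T b) ≠ 0} := by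
  simp only [Set.ofPred_exists]
  exact isOpen_iUnion fun b => isOpen_compl_singleton.preimage (eval_continuous (T b))

variable {F : Type*} [FunLike F A B] [NonUnitalAlgHomClass F 𝕜 A B] (T : F) (hT : Continuous T)

noncomputable def pullback (φ : characterSpace 𝕜 B) (hφ : ∃ a, φ (T a) ≠ 0) :
    characterSpace 𝕜 A :=
  ⟨(toCLM φ).comp
      ({ toFun := T, map_add' := map_add T, map_smul' := map_smul T, cont := hT } : A →L[𝕜] B),
    fun h => hφ.elim fun a ha => ha (DFunLike.congr_fun h a),
    fun x y => by
      change φ (T (x * y)) = φ (T x) * φ (T y)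
      rw [map_mul T, map_mul φ]⟩

@[simp]
lemma pullback_apply (φ : characterSpace 𝕜 B) (hφ : ∃ a, φ (T a) ≠ 0) (a : A) :
    pullback T hT φ hφ a = φ (T a) := rfl

lemma continuous_pullback :
    Continuous fun φ : {φ : characterSpace 𝕜 B // ∃ a, φ (T a) ≠ 0} => pullback T hT φ.1 φ.2 :=
  continuous_of_continuous_eval fun a => (eval_continuous (T a)).comp continuous_subtype_val

end WeakDual.CharacterSpace

section RelSCSigma

open BoundedContinuousFunction WeakDual.CharacterSpace

variable {ι : Type*} {B Y : ι → Type*} [∀ i, TopologicalSpace (B i)]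
  [∀ i, TopologicalSpace (Y i)] (r : ∀ i, C(Y i, B i))

noncomputable def relSCSigmaRestrict (i : ι) :
    relSCAlg (sigmaAnchor r) →⋆ₙₐ[ℂ] relSCAlg (r i) :=
  NonUnitalStarAlgHom.codRestrict
    ((sigmaRestrict i).comp (NonUnitalStarSubalgebraClass.subtype _)) _
    fun w => sigmaRestrict_mem_relSCAlg r i w.2

lemma continuous_relSCSigmaRestrict (i : ι) : Continuous (relSCSigmaRestrict r i) :=
  ((continuous_sigmaRestrict i).comp continuous_subtype_val).subtype_mk _

variable [DecidableEq ι]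

noncomputable def relSCSigmaExtend (i : ι) :
    relSCAlg (r i) →⋆ₙₐ[ℂ] relSCAlg (sigmaAnchor r) :=
  NonUnitalStarAlgHom.codRestrict
    ((sigmaExtend i).comp (NonUnitalStarSubalgebraClass.subtype _)) _
    fun f => sigmaExtend_mem_relSCAlg r i f.2

lemma continuous_relSCSigmaExtend (i : ι) : Continuous (relSCSigmaExtend r i) :=
  ((continuous_sigmaExtend i).comp continuous_subtype_val).subtype_mk _

@[simp]
lemma relSCSigmaRestrict_relSCSigmaExtend (i : ι) (a : relSCAlg (r i)) :
    relSCSigmaRestrict r i (relSCSigmaExtend r i a) = a :=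
  Subtype.ext (sigmaRestrict_sigmaExtend i _)

lemma relSCSigmaRestrict_relSCSigmaExtend_of_ne {i j : ι} (h : j ≠ i) (a : relSCAlg (r i)) :
    relSCSigmaRestrict r j (relSCSigmaExtend r i a) = 0 :=
  Subtype.ext (sigmaRestrict_sigmaExtend_of_ne h _)

lemma relSCSigmaExtend_mul (i : ι) (a : relSCAlg (r i)) (x : relSCAlg (sigmaAnchor r)) :
    relSCSigmaExtend r i a * x = relSCSigmaExtend r i (a * relSCSigmaRestrict r i x) :=
  Subtype.ext (sigmaExtend_mul i _ _)

lemma hasSum_relSCSigmaExtend_relSCSigmaRestrict (x : relSCAlg (sigmaAnchor r)) :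
    HasSum (fun j => relSCSigmaExtend r j (relSCSigmaRestrict r j x)) x :=
  (IsInducing.subtypeVal.hasSum_iff (g := NonUnitalStarSubalgebraClass.subtype _) _ _).1
    (hasSum_sigmaExtend_sigmaRestrict_of_mem_relSCAlg r x.2)

def relSCSigmaSupport (i : ι) : Set (characterSpace ℂ (relSCAlg (sigmaAnchor r))) :=
  {χ | ∃ a, χ (relSCSigmaExtend r i a) ≠ 0}

lemma exists_mem_relSCSigmaSupport (χ : characterSpace ℂ (relSCAlg (sigmaAnchor r))) :
    ∃ i, χ ∈ relSCSigmaSupport r i := by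
  obtain ⟨x, hx⟩ := exists_apply_ne_zero χ
  by_contra! h
  have hzero (j : ι) : χ (relSCSigmaExtend r j (relSCSigmaRestrict r j x)) = 0 := by
    by_contra hj
    exact h j ⟨_, hj⟩
  have hsum := (hasSum_relSCSigmaExtend_relSCSigmaRestrict r x).map χ (map_continuous χ)
  exact hx (hsum.unique (by simp [Function.comp_def, hzero]))

lemma eq_of_mem_relSCSigmaSupport {χ : characterSpace ℂ (relSCAlg (sigmaAnchor r))} {i j : ι}
    (hi : χ ∈ relSCSigmaSupport r i) (hj : χ ∈ relSCSigmaSupport r j) : i = j := by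
  by_contra hne
  obtain ⟨a, ha⟩ := hi
  obtain ⟨b, hb⟩ := hj
  have hab : relSCSigmaExtend r i a * relSCSigmaExtend r j b = 0 := by
    rw [relSCSigmaExtend_mul, relSCSigmaRestrict_relSCSigmaExtend_of_ne r hne, mul_zero, map_zero]
  exact mul_ne_zero ha hb (by rw [← map_mul, hab, map_zero])

lemma apply_relSCSigmaExtend_relSCSigmaRestrict
    {χ : characterSpace ℂ (relSCAlg (sigmaAnchor r))} {i : ι} (hi : χ ∈ relSCSigmaSupport r i)
    (x : relSCAlg (sigmaAnchor r)) :
    χ (relSCSigmaExtend r i (relSCSigmaRestrict r i x)) = χ x := by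
  obtain ⟨a, ha⟩ := hi
  apply mul_left_cancel₀ ha
  rw [← map_mul χ, ← map_mul χ, ← map_mul (relSCSigmaExtend r i), relSCSigmaExtend_mul]

noncomputable def relSCSigmaIndex (χ : characterSpace ℂ (relSCAlg (sigmaAnchor r))) : ι :=
  (exists_mem_relSCSigmaSupport r χ).choose

lemma relSCSigmaIndex_mem (χ : characterSpace ℂ (relSCAlg (sigmaAnchor r))) :
    χ ∈ relSCSigmaSupport r (relSCSigmaIndex r χ) :=
  (exists_mem_relSCSigmaSupport r χ).choose_spec

noncomputable def relSCSigmaToSigma (χ : characterSpace ℂ (relSCAlg (sigmaAnchor r))) :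
    Σ i, characterSpace ℂ (relSCAlg (r i)) :=
  ⟨relSCSigmaIndex r χ, pullback (relSCSigmaExtend r _) (continuous_relSCSigmaExtend r _) χ
    (relSCSigmaIndex_mem r χ)⟩

lemma relSCSigmaToSigma_eq {χ : characterSpace ℂ (relSCAlg (sigmaAnchor r))} {i : ι}
    (hi : χ ∈ relSCSigmaSupport r i) :
    relSCSigmaToSigma r χ =
      ⟨i, pullback (relSCSigmaExtend r i) (continuous_relSCSigmaExtend r i) χ hi⟩ := by
  obtain rfl := eq_of_mem_relSCSigmaSupport r (relSCSigmaIndex_mem r χ) hi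
  rfl

lemma exists_apply_relSCSigmaRestrict_ne_zero {i : ι} (φ : characterSpace ℂ (relSCAlg (r i))) :
    ∃ x, φ (relSCSigmaRestrict r i x) ≠ 0 := by
  obtain ⟨a, ha⟩ := exists_apply_ne_zero φ
  exact ⟨relSCSigmaExtend r i a, by rwa [relSCSigmaRestrict_relSCSigmaExtend]⟩

noncomputable def relSCSigmaOfSigma (p : Σ i, characterSpace ℂ (relSCAlg (r i))) :
    characterSpace ℂ (relSCAlg (sigmaAnchor r)) :=
  pullback (relSCSigmaRestrict r p.1) (continuous_relSCSigmaRestrict r p.1) p.2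
    (exists_apply_relSCSigmaRestrict_ne_zero r p.2)

lemma relSCSigmaOfSigma_mem (p : Σ i, characterSpace ℂ (relSCAlg (r i))) :
    relSCSigmaOfSigma r p ∈ relSCSigmaSupport r p.1 := by
  obtain ⟨a, ha⟩ := exists_apply_ne_zero p.2
  exact ⟨a, by simpa [relSCSigmaOfSigma] using ha⟩

noncomputable def relSCSigmaHomeomorph :
    characterSpace ℂ (relSCAlg (sigmaAnchor r)) ≃ₜ Σ i, characterSpace ℂ (relSCAlg (r i)) where
  toFun := relSCSigmaToSigma r
  invFun := relSCSigmaOfSigma r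
  left_inv χ := CharacterSpace.ext (apply_relSCSigmaExtend_relSCSigmaRestrict r (relSCSigmaIndex_mem r χ))
  right_inv := by
    rintro ⟨i, φ⟩
    rw [relSCSigmaToSigma_eq r (relSCSigmaOfSigma_mem r ⟨i, φ⟩)]
    exact congrArg (Sigma.mk i) (CharacterSpace.ext fun a => by simp [relSCSigmaOfSigma])
  continuous_toFun := by
    refine continuous_of_cover_nhds (s := relSCSigmaSupport r) (fun χ => ⟨relSCSigmaIndex r χ,
      (isOpen_setOf_exists_apply_ne_zero _).mem_nhds (relSCSigmaIndex_mem r χ)⟩) fun i => ?_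
    rw [continuousOn_iff_continuous_domRestrict]
    have hrestrict : (relSCSigmaSupport r i).domRestrict (relSCSigmaToSigma r) =
        fun χ => ⟨i, pullback (relSCSigmaExtend r i) (continuous_relSCSigmaExtend r i) χ.1 χ.2⟩ :=
      funext fun χ => relSCSigmaToSigma_eq r χ.2
    rw [hrestrict]
    exact continuous_sigmaMk.comp (continuous_pullback _ _)
  continuous_invFun :=
    continuous_sigma fun i => (continuous_pullback _ (continuous_relSCSigmaRestrict r i)).comp
      (continuous_id.subtype_mk (exists_apply_relSCSigmaRestrict_ne_zero r))

end RelSCSigma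

theorem relSC_sigma_general
    {ι : Type*} {B : ι → Type*} {Y : ι → Type*}
    [∀ i, TopologicalSpace (B i)] [∀ i, TopologicalSpace (Y i)]
    (r : ∀ i, C(Y i, B i)) :
    Nonempty ((RelSC (⟨Sigma.map id (fun i => ⇑(r i)),
        Continuous.sigma_map (fun i => (r i).continuous)⟩ :
          C((Σ i, Y i), (Σ i, B i))) : Type _) ≃ₜ (Σ i, ↥(RelSC (r i)))) := by
  classical
  exact ⟨relSCSigmaHomeomorph r⟩

/-- The relative Stone–Čech compactification of a disjoint union is the disjoint union of
the relative Stone–Čech compactifications. -/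
theorem relSC_sigma
    {ι : Type*} {B : ι → Type*} {Y : ι → Type*}
    [∀ i, TopologicalSpace (B i)] [∀ i, TopologicalSpace (Y i)]
    [∀ i, LocallyCompactSpace (B i)] [∀ i, T2Space (B i)]
    (r : ∀ i, C(Y i, B i)) :
    Nonempty ((RelSC (⟨Sigma.map id (fun i => ⇑(r i)),
        Continuous.sigma_map (fun i => (r i).continuous)⟩ :
          C((Σ i, Y i), (Σ i, B i))) : Type _) ≃ₜ (Σ i, ↥(RelSC (r i)))) :=
  relSC_sigma_general r
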